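/- arXiv:2108.10240 — 3 statements merged into one kernel-verified Lean document; each statement's English description precedes it below -/
import Mathlib

section
/- Assume hypothesis (H2) with constants η, T₁, c. Then every Fourier solution φ of the free equation φ″ + Aφ = 0 on [0,T₁] with data (φ0,φ1) ∈ X_1 × X_{1/2} at time 0 satisfies c ∫₀^{T₁} ‖Cφ′(t)‖² dt ≥ Σ_{n≥1} λ_n^{−2/η}(λ_n⁴|(φ0)_n|² + λ_n²|(φ1)_n|²), i.e. the velocity observation through C controls the data in the norm of X_{1−1/(2η)} × X_{1/2−1/(2η)}. -/
/-! Apply (H2) to the velocity: if `φ` is a free solution with data `(φ0, φ1)`, then `(φ', -Aφ)`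
is again a free solution, with data `(φ1, -Aφ0)`, and its (H2)-weighted data norm is exactly the
left-hand side. That `-Aφ(t)` lies in `H` and that this new solution has finite energy follows from
the conservation of each modal energy `λₙ²|φₙ(t)|² + |φₙ'(t)|²`, obtained by differentiating it,
together with `(φ0, φ1) ∈ X_1 × X_{1/2}`. -/

open MeasureTheory Filter
open scoped ENNReal NNReal

noncomputable section

namespace SlowDecayLQ

variable {H : Type*} [NormedAddCommGroup H] [InnerProductSpace ℂ H] [CompleteSpace H]

/-- The `n`-th Fourier coefficient of `x` with respect to the Hilbert basis `b`,
`x_n = ⟨x, φ_n⟩`. -/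
def coef (b : HilbertBasis ℕ ℂ H) (x : H) (n : ℕ) : ℂ := b.repr x n

/-- Weighted squared norm `Σₙ μₙ (λₙ²|wₙ|² + |vₙ|²)`, valued in `ℝ≥0∞`. -/
def wNormSq (lam : ℕ → ℝ) (b : HilbertBasis ℕ ℂ H) (μ : ℕ → ℝ) (w v : H) : ℝ≥0∞ :=
  ∑' n, ENNReal.ofReal (μ n * ((lam n) ^ 2 * ‖coef b w n‖ ^ 2 + ‖coef b v n‖ ^ 2))

/-- Squared energy norm `‖(w,v)‖_𝓗² = Σₙ (λₙ²|wₙ|² + |vₙ|²)`. -/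
def HnormSq (lam : ℕ → ℝ) (b : HilbertBasis ℕ ℂ H) (w v : H) : ℝ≥0∞ :=
  wNormSq lam b (fun _ => 1) w v

/-- Squared norm `‖(w,v)‖_{D(𝓐^s)}² = Σₙ λₙ^{2s}(λₙ²|wₙ|² + |vₙ|²)`. -/
def DAnormSq (lam : ℕ → ℝ) (b : HilbertBasis ℕ ℂ H) (s : ℝ) (w v : H) : ℝ≥0∞ :=
  wNormSq lam b (fun n => lam n ^ (2 * s)) w v

/-- Squared norm `‖(w,v)‖_{D(𝓐^s)'}² = Σₙ λₙ^{-2(s+1)}(λₙ²|wₙ|² + |vₙ|²)`. -/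
def DAdualNormSq (lam : ℕ → ℝ) (b : HilbertBasis ℕ ℂ H) (s : ℝ) (w v : H) : ℝ≥0∞ :=
  wNormSq lam b (fun n => lam n ^ (-2 * (s + 1))) w v

/-- Squared norm `‖x‖_{X_β}² = Σₙ λₙ^{4β}|xₙ|²`. -/
def XnormSq (lam : ℕ → ℝ) (b : HilbertBasis ℕ ℂ H) (β : ℝ) (x : H) : ℝ≥0∞ :=
  ∑' n, ENNReal.ofReal (lam n ^ (4 * β) * ‖coef b x n‖ ^ 2)

/-- `C` is a bounded linear operator from `X_{1/2}` to `H`: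
`‖Cx‖² ≤ M ‖x‖_{X_{1/2}}²`. -/
def CBounded (lam : ℕ → ℝ) (b : HilbertBasis ℕ ℂ H) (Cop : H →ₗ[ℂ] H) : Prop :=
  ∃ M : ℝ, 0 ≤ M ∧ ∀ x : H,
    ((‖Cop x‖₊ : ℝ≥0∞)) ^ 2 ≤ ENNReal.ofReal M * XnormSq lam b (1 / 2) x

/-- A Fourier solution of `w'' + Aw = f` on the interval `I` with data `(w0, w1)` at
time `t₀ ∈ I`: the coefficients `wₙ` are C¹ with locally absolutely continuous derivative
and satisfy `wₙ'' + λₙ² wₙ = fₙ` a.e. (encoded in integral form). -/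
structure IsFourierSol (lam : ℕ → ℝ) (b : HilbertBasis ℕ ℂ H) (f : ℝ → ℕ → ℂ)
    (I : Set ℝ) (t₀ : ℝ) (w0 w1 : H) (w w' : ℝ → H) : Prop where
  intVel : ∀ n, ∀ t ∈ I, IntervalIntegrable (fun s => coef b (w' s) n) volume t₀ t
  intAcc : ∀ n, ∀ t ∈ I,
    IntervalIntegrable (fun s => f s n - (lam n : ℂ) ^ 2 * coef b (w s) n) volume t₀ t
  posEq : ∀ n, ∀ t ∈ I, coef b (w t) n = coef b w0 n + ∫ s in t₀..t, coef b (w' s) n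
  velEq : ∀ n, ∀ t ∈ I, coef b (w' t) n
      = coef b w1 n + ∫ s in t₀..t, (f s n - (lam n : ℂ) ^ 2 * coef b (w s) n)

/-- Zero forcing term (free wave equation). -/
def noForce : ℝ → ℕ → ℂ := fun _ _ => 0

/-- Weak observability of `(A, B*)` with weight `μ`: every finite-energy Fourier solution of
the free equation on `[0,T]` satisfies `c ∫₀ᵀ ‖B*w'(t)‖² dt ≥ Σₙ μₙ(λₙ²|(w0)ₙ|² + |(w1)ₙ|²)`. -/
def ObsB (lam : ℕ → ℝ) (b : HilbertBasis ℕ ℂ H) (B : H →L[ℂ] H)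
    (μ : ℕ → ℝ) (T c : ℝ) : Prop :=
  ∀ (w0 w1 : H) (w w' : ℝ → H),
    IsFourierSol lam b noForce (Set.Icc 0 T) 0 w0 w1 w w' →
    (∀ t ∈ Set.Icc 0 T, HnormSq lam b (w t) (w' t) < ⊤) →
    HnormSq lam b w0 w1 < ⊤ →
    wNormSq lam b μ w0 w1 ≤
      ENNReal.ofReal c *
        ∫⁻ t in Set.Ioc 0 T, (‖(ContinuousLinearMap.adjoint B) (w' t)‖₊ : ℝ≥0∞) ^ 2

/-- Weak observability of `(A, C)` with weight `μ`: every finite-energy Fourier solution of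
the free equation on `[0,T]` satisfies `c ∫₀ᵀ ‖Cw(t)‖² dt ≥ Σₙ μₙ(λₙ²|(w0)ₙ|² + |(w1)ₙ|²)`. -/
def ObsC (lam : ℕ → ℝ) (b : HilbertBasis ℕ ℂ H) (Cop : H →ₗ[ℂ] H)
    (μ : ℕ → ℝ) (T c : ℝ) : Prop :=
  ∀ (w0 w1 : H) (w w' : ℝ → H),
    IsFourierSol lam b noForce (Set.Icc 0 T) 0 w0 w1 w w' →
    (∀ t ∈ Set.Icc 0 T, HnormSq lam b (w t) (w' t) < ⊤) →
    HnormSq lam b w0 w1 < ⊤ →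
    wNormSq lam b μ w0 w1 ≤
      ENNReal.ofReal c * ∫⁻ t in Set.Ioc 0 T, (‖Cop (w t)‖₊ : ℝ≥0∞) ^ 2

/-- Hypothesis (H1): weak observability of `(A, B*)` with weight `λₙ^{-2/ρ}`. -/
def H1Hyp (lam : ℕ → ℝ) (b : HilbertBasis ℕ ℂ H) (B : H →L[ℂ] H) (ρ T₀ c : ℝ) : Prop :=
  ObsB lam b B (fun n => lam n ^ (-2 / ρ)) T₀ c

/-- Hypothesis (H2): weak observability of `(A, C)` with weight `λₙ^{-2/η}`. -/
def H2Hyp (lam : ℕ → ℝ) (b : HilbertBasis ℕ ℂ H) (Cop : H →ₗ[ℂ] H) (η T₁ c : ℝ) : Prop :=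
  ObsC lam b Cop (fun n => lam n ^ (-2 / η)) T₁ c

/-- The quadratic cost `½ ∫_S (‖u(t)‖² + ‖Cw(t)‖²) dt`. -/
def cost (Cop : H →ₗ[ℂ] H) (S : Set ℝ) (u w : ℝ → H) : ℝ≥0∞ :=
  2⁻¹ * ∫⁻ t in S, ((‖u t‖₊ : ℝ≥0∞) ^ 2 + (‖Cop (w t)‖₊ : ℝ≥0∞) ^ 2)

/-- The finite-horizon value function `V_T(w0,w1)`. -/
def ValueFin (lam : ℕ → ℝ) (b : HilbertBasis ℕ ℂ H) (B : H →L[ℂ] H) (Cop : H →ₗ[ℂ] H)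
    (T : ℝ) (w0 w1 : H) : ℝ≥0∞ :=
  sInf { J : ℝ≥0∞ | ∃ u w w' : ℝ → H,
    IsFourierSol lam b (fun t n => coef b (B (u t)) n) (Set.Icc 0 T) 0 w0 w1 w w' ∧
    (∀ t ∈ Set.Icc 0 T, HnormSq lam b (w t) (w' t) < ⊤) ∧
    J = cost Cop (Set.Ioc 0 T) u w }

/-- The infinite-horizon value function `V_∞(w0,w1)`. -/
def ValueInf (lam : ℕ → ℝ) (b : HilbertBasis ℕ ℂ H) (B : H →L[ℂ] H) (Cop : H →ₗ[ℂ] H)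
    (w0 w1 : H) : ℝ≥0∞ :=
  sInf { J : ℝ≥0∞ | ∃ u w w' : ℝ → H,
    IsFourierSol lam b (fun t n => coef b (B (u t)) n) (Set.Ici 0) 0 w0 w1 w w' ∧
    (∀ t ∈ Set.Ici (0 : ℝ), HnormSq lam b (w t) (w' t) < ⊤) ∧
    J = cost Cop (Set.Ioi 0) u w }

/-- A Bellman-optimal control–trajectory pair for `V_∞` with data `(w0,w1)`. -/
def BellmanOptimal (lam : ℕ → ℝ) (b : HilbertBasis ℕ ℂ H) (B : H →L[ℂ] H) (Cop : H →ₗ[ℂ] H)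
    (w0 w1 : H) (u w w' : ℝ → H) : Prop :=
  IsFourierSol lam b (fun t n => coef b (B (u t)) n) (Set.Ici 0) 0 w0 w1 w w' ∧
  (∀ t ∈ Set.Ici (0 : ℝ), HnormSq lam b (w t) (w' t) < ⊤) ∧
  ∀ τ : ℝ, 0 ≤ τ → cost Cop (Set.Ioi τ) u w = ValueInf lam b B Cop (w τ) (w' τ)

/-- A stationary optimal triple `(w̄, ū, p̄)` for the target `z`. -/
structure StationaryTriple (lam : ℕ → ℝ) (b : HilbertBasis ℕ ℂ H) (B : H →L[ℂ] H)
    (Cop : H →ₗ[ℂ] H) (z wbar ubar pbar : H) : Prop where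
  memw : XnormSq lam b 1 wbar < ⊤
  memp : XnormSq lam b 1 pbar < ⊤
  stateEq : ∀ n, (lam n : ℂ) ^ 2 * coef b wbar n = coef b (B ubar) n
  adjEq : ∀ n, (lam n : ℂ) ^ 2 * coef b pbar n = (inner ℂ (Cop (b n)) (Cop wbar - z) : ℂ)
  ctrlEq : ubar = -(ContinuousLinearMap.adjoint B) pbar

/-- A finite-horizon optimality-system triple on `[0,T]` for target `z` with data `(w0,w1)`. -/
structure OSTriple (lam : ℕ → ℝ) (b : HilbertBasis ℕ ℂ H) (B : H →L[ℂ] H)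
    (Cop : H →ₗ[ℂ] H) (z : H) (T : ℝ) (w0 w1 : H) (w w' u p p' : ℝ → H) : Prop where
  adjSol : IsFourierSol lam b (fun t n => (inner ℂ (Cop (b n)) (Cop (w t) - z) : ℂ))
      (Set.Icc 0 T) T 0 0 p p'
  adjMem : ∀ t ∈ Set.Icc 0 T, HnormSq lam b (p t) (p' t) < ⊤
  ctrlEq : ∀ t, u t = -(ContinuousLinearMap.adjoint B) (p t)
  stateSol : IsFourierSol lam b (fun t n => coef b (B (u t)) n) (Set.Icc 0 T) 0 w0 w1 w w'
  stateMem : ∀ t ∈ Set.Icc 0 T, HnormSq lam b (w t) (w' t) < ⊤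

/-- `g(T) = ((T+1)^{1-r} - 1)/(1-r)` if `r ≠ 1`, `g(T) = log(T+1)` if `r = 1`. -/
def gfun (r T : ℝ) : ℝ :=
  if r = 1 then Real.log (T + 1) else ((T + 1) ^ (1 - r) - 1) / (1 - r)

/-- A coefficientwise (relaxed-regularity) Fourier solution of `w'' + Aw = f`. -/
structure IsCoefSol (lam : ℕ → ℝ) (f : ℝ → ℕ → ℂ) (I : Set ℝ) (t₀ : ℝ)
    (a0 a1 : ℕ → ℂ) (q q' : ℝ → ℕ → ℂ) : Prop where
  intVel : ∀ n, ∀ t ∈ I, IntervalIntegrable (fun s => q' s n) volume t₀ t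
  intAcc : ∀ n, ∀ t ∈ I, IntervalIntegrable (fun s => f s n - (lam n : ℂ) ^ 2 * q s n) volume t₀ t
  posEq : ∀ n, ∀ t ∈ I, q t n = a0 n + ∫ s in t₀..t, q' s n
  velEq : ∀ n, ∀ t ∈ I, q' t n = a1 n + ∫ s in t₀..t, (f s n - (lam n : ℂ) ^ 2 * q s n)

open Topology

section Primitive

variable {E : Type*} [NormedAddCommGroup E] [NormedSpace ℝ E]
  {f g : ℝ → E} {a b : ℝ} {c : E}

theorem continuousOn_of_eq_add_integral (hab : a ≤ b) (hf : IntervalIntegrable f volume a b)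
    (hg : ∀ t ∈ Set.Icc a b, g t = c + ∫ s in a..t, f s) : ContinuousOn g (Set.Icc a b) := by
  have hprim := intervalIntegral.continuousOn_primitive_interval' hf Set.left_mem_uIcc
  rw [Set.uIcc_of_le hab] at hprim
  exact (continuousOn_const.add hprim).congr hg

theorem hasDerivWithinAt_Ici_of_eq_add_integral [CompleteSpace E]
    (hf : ContinuousOn f (Set.Icc a b)) (hg : ∀ t ∈ Set.Icc a b, g t = c + ∫ s in a..t, f s)
    {x : ℝ} (hx : x ∈ Set.Ico a b) : HasDerivWithinAt g (f x) (Set.Ici x) x := by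
  have hxI : x ∈ Set.Icc a b := Set.Ico_subset_Icc_self hx
  have hnhds : Set.Icc a b ∈ 𝓝[>] x := Icc_mem_nhdsGT_of_mem hx
  have hprim : HasDerivWithinAt (fun u => c + ∫ s in a..u, f s) (f x) (Set.Ici x) x :=
    (intervalIntegral.integral_hasDerivWithinAt_right
      ((hf.mono (Set.Icc_subset_Icc_right hx.2.le)).intervalIntegrable_of_Icc hx.1)
      ⟨_, hnhds, hf.aestronglyMeasurable measurableSet_Icc⟩
      ((hf x hxI).mono_of_mem_nhdsWithin hnhds)).const_add c
  exact hprim.congr_of_eventuallyEq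
    (eventually_of_mem (Icc_mem_nhdsGE_of_mem hx) hg) (hg x hxI)

end Primitive

theorem energy_eq_of_eq_add_integral {F : Type*} [NormedAddCommGroup F] [InnerProductSpace ℝ F]
    [CompleteSpace F] {q p : ℝ → F} {a b k : ℝ} {q₀ p₀ : F}
    (hpi : IntervalIntegrable p volume a b)
    (hq : ∀ t ∈ Set.Icc a b, q t = q₀ + ∫ s in a..t, p s)
    (hp : ∀ t ∈ Set.Icc a b, p t = p₀ + ∫ s in a..t, -(k • q s)) :
    ∀ t ∈ Set.Icc a b, k * ‖q t‖ ^ 2 + ‖p t‖ ^ 2 = k * ‖q₀‖ ^ 2 + ‖p₀‖ ^ 2 := by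
  intro t ht
  have hab : a ≤ b := ht.1.trans ht.2
  have hqc : ContinuousOn q (Set.Icc a b) := continuousOn_of_eq_add_integral hab hpi hq
  have hkqc : ContinuousOn (fun s => -(k • q s)) (Set.Icc a b) := (hqc.const_smul k).neg
  have hpc : ContinuousOn p (Set.Icc a b) :=
    continuousOn_of_eq_add_integral hab (hkqc.intervalIntegrable_of_Icc hab) hp
  have hderiv : ∀ x ∈ Set.Ico a b,
      HasDerivWithinAt (fun u => k * ‖q u‖ ^ 2 + ‖p u‖ ^ 2) 0 (Set.Ici x) x := by
    intro x hx
    refine (((hasDerivWithinAt_Ici_of_eq_add_integral hpc hq hx).norm_sq.const_mul k).add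
      (hasDerivWithinAt_Ici_of_eq_add_integral hkqc hp hx).norm_sq).congr_deriv ?_
    rw [inner_neg_right, real_inner_smul_right, real_inner_comm]
    ring
  have hcont : ContinuousOn (fun u => k * ‖q u‖ ^ 2 + ‖p u‖ ^ 2) (Set.Icc a b) :=
    (continuousOn_const.mul (hqc.norm.pow 2)).add (hpc.norm.pow 2)
  have ha : a ∈ Set.Icc a b := Set.left_mem_Icc.2 hab
  simpa [hq a ha, hp a ha] using constant_of_has_deriv_right_zero hcont hderiv t ht

theorem summable_of_tsum_ofReal_lt_top {ι : Type*} {f : ι → ℝ} (hf : ∀ i, 0 ≤ f i)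
    (h : ∑' i, ENNReal.ofReal (f i) < ⊤) : Summable f :=
  (ENNReal.summable_toReal h.ne).congr fun i => ENNReal.toReal_ofReal (hf i)

theorem norm_neg_ofReal_sq_mul_sq (L : ℝ) (z : ℂ) :
    ‖-((L : ℂ) ^ 2 * z)‖ ^ 2 = L ^ 4 * ‖z‖ ^ 2 := by
  rw [norm_neg, norm_mul, norm_pow, Complex.norm_real, Real.norm_eq_abs, sq_abs]
  ring

theorem noForce_sub_ofReal_sq_mul (L s : ℝ) (n : ℕ) (z : ℂ) :
    noForce s n - (L : ℂ) ^ 2 * z = -(L ^ 2 • z) := by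
  simp [noForce, Complex.real_smul]

section

omit [CompleteSpace H]

variable {lam : ℕ → ℝ} {b : HilbertBasis ℕ ℂ H}

theorem exists_coef_eq {c : ℕ → ℂ}
    (hc : Summable fun n => ‖c n‖ ^ 2) : ∃ x : H, ∀ n, coef b x n = c n :=
  ⟨b.repr.symm ⟨c, memℓp_gen (by simpa using hc)⟩, fun n => by simp [coef]⟩

theorem exists_coef_eq_neg_sq_mul {x : H}
    (hx : Summable fun n => lam n ^ 4 * ‖coef b x n‖ ^ 2) :
    ∃ y : H, ∀ n, coef b y n = -((lam n : ℂ) ^ 2 * coef b x n) :=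
  exists_coef_eq (by simpa only [norm_neg_ofReal_sq_mul_sq] using hx)

theorem XnormSq_one (x : H) :
    XnormSq lam b 1 x = ∑' n, ENNReal.ofReal (lam n ^ 4 * ‖coef b x n‖ ^ 2) := by
  norm_num [XnormSq]

theorem XnormSq_one_half (x : H) :
    XnormSq lam b (1 / 2) x = ∑' n, ENNReal.ofReal (lam n ^ 2 * ‖coef b x n‖ ^ 2) := by
  norm_num [XnormSq]

theorem tsum_ofReal_lt_top_of_XnormSq {x y : H} (hx : XnormSq lam b 1 x < ⊤)
    (hy : XnormSq lam b (1 / 2) y < ⊤) :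
    ∑' n, ENNReal.ofReal (lam n ^ 4 * ‖coef b x n‖ ^ 2 + lam n ^ 2 * ‖coef b y n‖ ^ 2) < ⊤ := by
  rw [XnormSq_one] at hx
  rw [XnormSq_one_half] at hy
  rw [tsum_congr fun n => ENNReal.ofReal_add (by positivity) (by positivity), ENNReal.tsum_add]
  exact ENNReal.add_lt_top.2 ⟨hx, hy⟩

theorem wNormSq_eq_of_coef_eq_neg (μ : ℕ → ℝ) {x y z : H}
    (hz : ∀ n, coef b z n = -((lam n : ℂ) ^ 2 * coef b x n)) :
    wNormSq lam b μ y z = ∑' n, ENNReal.ofReal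
      (μ n * (lam n ^ 4 * ‖coef b x n‖ ^ 2 + lam n ^ 2 * ‖coef b y n‖ ^ 2)) := by
  refine tsum_congr fun n => ?_
  rw [hz n, norm_neg_ofReal_sq_mul_sq]
  ring_nf

theorem IsFourierSol.energy_eq {t₀ T : ℝ} {w0 w1 : H} {w w' : ℝ → H}
    (hsol : IsFourierSol lam b noForce (Set.Icc t₀ T) t₀ w0 w1 w w') (n : ℕ) :
    ∀ t ∈ Set.Icc t₀ T, lam n ^ 2 * ‖coef b (w t) n‖ ^ 2 + ‖coef b (w' t) n‖ ^ 2 =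
      lam n ^ 2 * ‖coef b w0 n‖ ^ 2 + ‖coef b w1 n‖ ^ 2 := by
  intro t ht
  refine energy_eq_of_eq_add_integral (hsol.intVel n T ⟨ht.1.trans ht.2, le_rfl⟩)
    (hsol.posEq n) (fun s hs => ?_) t ht
  simpa only [noForce_sub_ofReal_sq_mul] using hsol.velEq n s hs

theorem IsFourierSol.velocity {t₀ T : ℝ} {w0 w1 w2 : H} {w w' v : ℝ → H}
    (hsol : IsFourierSol lam b noForce (Set.Icc t₀ T) t₀ w0 w1 w w')
    (hw2 : ∀ n, coef b w2 n = -((lam n : ℂ) ^ 2 * coef b w0 n))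
    (hv : ∀ t ∈ Set.Icc t₀ T, ∀ n, coef b (v t) n = -((lam n : ℂ) ^ 2 * coef b (w t) n)) :
    IsFourierSol lam b noForce (Set.Icc t₀ T) t₀ w1 w2 w' v where
  intVel n t ht := by
    have hsub := Set.uIcc_subset_Icc ⟨le_rfl, ht.1.trans ht.2⟩ ht
    refine (hsol.intAcc n t ht).congr fun s hs => ?_
    simp [noForce, hv s (hsub (Set.uIoc_subset_uIcc hs))]
  intAcc n t ht := by
    simpa only [noForce, zero_sub, neg_mul] using
      (hsol.intVel n t ht).const_mul (-(lam n : ℂ) ^ 2)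
  posEq n t ht := by
    have hsub := Set.uIcc_subset_Icc ⟨le_rfl, ht.1.trans ht.2⟩ ht
    rw [hsol.velEq n t ht]
    congr 1
    refine intervalIntegral.integral_congr fun s hs => ?_
    simp [noForce, hv s (hsub hs)]
  velEq n t ht := by
    rw [hv t ht n, hw2 n, hsol.posEq n t ht]
    simp only [noForce, zero_sub]
    rw [intervalIntegral.integral_neg, intervalIntegral.integral_const_mul]
    ring

end

theorem statement2_general
    (b : HilbertBasis ℕ ℂ H) (lam : ℕ → ℝ)
    (Cop : H →ₗ[ℂ] H)
    (η T₁ c : ℝ)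
    (hH2 : H2Hyp lam b Cop η T₁ c)
    (φ0 φ1 : H) (hφ0 : XnormSq lam b 1 φ0 < ⊤) (hφ1 : XnormSq lam b (1 / 2) φ1 < ⊤)
    (φ φ' : ℝ → H)
    (hsol : IsFourierSol lam b noForce (Set.Icc 0 T₁) 0 φ0 φ1 φ φ') :
    (∑' n, ENNReal.ofReal (lam n ^ (-2 / η) *
        ((lam n) ^ 4 * ‖coef b φ0 n‖ ^ 2 + (lam n) ^ 2 * ‖coef b φ1 n‖ ^ 2))) ≤
      ENNReal.ofReal c * ∫⁻ t in Set.Ioc 0 T₁, (‖Cop (φ' t)‖₊ : ℝ≥0∞) ^ 2 := by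
  set S : ℕ → ℝ := fun n => lam n ^ 4 * ‖coef b φ0 n‖ ^ 2 + lam n ^ 2 * ‖coef b φ1 n‖ ^ 2
  have hSfin : ∑' n, ENNReal.ofReal (S n) < ⊤ := tsum_ofReal_lt_top_of_XnormSq hφ0 hφ1
  have hS : Summable S := summable_of_tsum_ofReal_lt_top (fun n => by positivity) hSfin
  have hE : ∀ t ∈ Set.Icc 0 T₁, ∀ n,
      lam n ^ 4 * ‖coef b (φ t) n‖ ^ 2 + lam n ^ 2 * ‖coef b (φ' t) n‖ ^ 2 = S n := by
    intro t ht n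
    linear_combination lam n ^ 2 * hsol.energy_eq n t ht
  have hA : ∀ x y : H,
      (∀ n, lam n ^ 4 * ‖coef b x n‖ ^ 2 + lam n ^ 2 * ‖coef b y n‖ ^ 2 = S n) →
      ∃ z : H, ∀ n, coef b z n = -((lam n : ℂ) ^ 2 * coef b x n) := fun x y hxy =>
    exists_coef_eq_neg_sq_mul <| hS.of_nonneg_of_le (fun n => by positivity) fun n =>
      hxy n ▸ le_add_of_nonneg_right (by positivity)
  obtain ⟨w2, hw2⟩ := hA φ0 φ1 fun n => rfl
  choose! v hv using fun t (ht : t ∈ Set.Icc 0 T₁) => hA (φ t) (φ' t) (hE t ht)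
  have hmem : ∀ t ∈ Set.Icc 0 T₁, HnormSq lam b (φ' t) (v t) < ⊤ := by
    intro t ht
    simpa only [HnormSq, wNormSq_eq_of_coef_eq_neg _ (hv t ht), hE t ht, one_mul] using hSfin
  have hfin : HnormSq lam b φ1 w2 < ⊤ := by
    simpa only [HnormSq, wNormSq_eq_of_coef_eq_neg _ hw2, one_mul] using hSfin
  simpa only [wNormSq_eq_of_coef_eq_neg _ hw2] using hH2 φ1 w2 φ' v (hsol.velocity hw2 hv) hmem hfin

/-- under (H2), the velocity observation through `C` of free solutions with
data in `X_1 × X_{1/2}` controls the data in the norm of `X_{1-1/(2η)} × X_{1/2-1/(2η)}`. -/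
theorem statement2
    (b : HilbertBasis ℕ ℂ H) (lam : ℕ → ℝ)
    (hlam : ∀ n, 0 < lam n) (hlamTop : Tendsto lam atTop atTop)
    (Cop : H →ₗ[ℂ] H) (hCB : CBounded lam b Cop)
    (η T₁ c : ℝ) (hη : 0 < η) (hT₁ : 0 < T₁) (hc : 0 < c)
    (hH2 : H2Hyp lam b Cop η T₁ c)
    (φ0 φ1 : H) (hφ0 : XnormSq lam b 1 φ0 < ⊤) (hφ1 : XnormSq lam b (1 / 2) φ1 < ⊤)
    (φ φ' : ℝ → H)
    (hsol : IsFourierSol lam b noForce (Set.Icc 0 T₁) 0 φ0 φ1 φ φ')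
    (hmem : ∀ t ∈ Set.Icc 0 T₁, HnormSq lam b (φ t) (φ' t) < ⊤) :
    (∑' n, ENNReal.ofReal (lam n ^ (-2 / η) *
        ((lam n) ^ 4 * ‖coef b φ0 n‖ ^ 2 + (lam n) ^ 2 * ‖coef b φ1 n‖ ^ 2))) ≤
      ENNReal.ofReal c * ∫⁻ t in Set.Ioc 0 T₁, (‖Cop (φ' t)‖₊ : ℝ≥0∞) ^ 2 :=
  statement2_general b lam Cop η T₁ c hH2 φ0 φ1 hφ0 hφ1 φ φ' hsol

end SlowDecayLQ
end
end

section
/- Let (a_m)_{m≥1} be a sequence of positive real numbers and let C > 0 and α > −1 be constants such that a_{m+1} ≤ a_m − C (a_{m+1})^{2+α} for all m ≥ 1. Then there exists a positive constant M (depending only on C and α) such that a_m ≤ M / (m+1)^{1/(1+α)} for all m ≥ 1. -/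
open MeasureTheory Filter
open scoped ENNReal NNReal

noncomputable section

/-!
Compare `a` with the profile `b m = M / (m + 1) ^ s`, `s = 1 / (1 + α)`. As `x ↦ x + C x ^ (2 + α)`
is strictly increasing on `[0, ∞)`, the chain
`a (m+1) + C a (m+1) ^ (2+α) ≤ a m ≤ b m ≤ b (m+1) + C b (m+1) ^ (2+α)` propagates `a m ≤ b m`,
provided `b` satisfies the last inequality. By Bernoulli's inequality
`t ^ (-s) - (t + 1) ^ (-s) ≤ s t ^ (-(s+1)) ≤ s 2 ^ (s+1) (t + 1) ^ (-(s+1))`, while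
`s (2 + α) = s + 1` gives `C b (m+1) ^ (2+α) = C M ^ (2+α) (m + 2) ^ (-(s+1))`: the same decay, so
`C M ^ (1+α) ≥ s 2 ^ (s+1)` suffices, and `M ≥ 2 ^ s a 1` starts the induction.
-/

theorem StrictMonoOn.le_of_le_apply_succ {α : Type*} [LinearOrder α] {f : α → α} {S : Set α}
    (hf : StrictMonoOn f S) {a b : ℕ → α} {n₀ : ℕ} (ha : ∀ m ≥ n₀, a m ∈ S)
    (hb : ∀ m ≥ n₀, b m ∈ S) (hfa : ∀ m ≥ n₀, f (a (m + 1)) ≤ a m)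
    (hfb : ∀ m ≥ n₀, b m ≤ f (b (m + 1))) (h₀ : a n₀ ≤ b n₀) :
    ∀ m ≥ n₀, a m ≤ b m := by
  intro m hm
  induction m, hm using Nat.le_induction with
  | base => exact h₀
  | succ m hm ih =>
    exact (hf.le_iff_le (ha _ (by omega)) (hb _ (by omega))).mp
      ((hfa m hm).trans (ih.trans (hfb m hm)))

theorem strictMonoOn_add_mul_rpow {C p : ℝ} (hC : 0 ≤ C) (hp : 0 < p) :
    StrictMonoOn (fun x : ℝ => x + C * x ^ p) (Set.Ici 0) :=
  strictMonoOn_id.add_monotone fun _ hx _ _ hxy =>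
    mul_le_mul_of_nonneg_left ((Real.strictMonoOn_rpow_Ici_of_exponent_pos hp).monotoneOn hx
      (Set.mem_Ici.2 ((Set.mem_Ici.1 hx).trans hxy)) hxy) hC

/-- Bernoulli's inequality `(1 + x) ^ (s + 1) ≥ 1 + (s + 1) x` at `x = -1 / (t + 1)`. -/
theorem sub_mul_rpow_add_one_le {s t : ℝ} (hs : 0 ≤ s) (ht : 0 < t) :
    (t - s) * (t + 1) ^ s ≤ t * t ^ s := by
  have ht1 : 0 < t + 1 := by linarith
  have hBern : 1 + (s + 1) * (-1 / (t + 1)) ≤ (1 + -1 / (t + 1)) ^ (s + 1) :=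
    one_add_mul_self_le_rpow_one_add
      (by rw [neg_div, neg_le_neg_iff, div_le_one ht1]; linarith) (by linarith)
  have hbase : 1 + -1 / (t + 1) = t / (t + 1) := by field_simp; ring
  rw [hbase, Real.div_rpow ht.le ht1.le, Real.rpow_add ht, Real.rpow_add ht1,
    Real.rpow_one, Real.rpow_one, le_div_iff₀ (by positivity)] at hBern
  field_simp at hBern
  linarith

theorem inv_rpow_sub_inv_rpow_add_one_le {s t : ℝ} (hs : 0 ≤ s) (ht : 0 < t) :
    (t ^ s)⁻¹ - ((t + 1) ^ s)⁻¹ ≤ s / t ^ (s + 1) := by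
  have hA := Real.rpow_pos_of_pos ht s
  have hB := Real.rpow_pos_of_pos (by linarith : 0 < t + 1) s
  rw [Real.rpow_add ht, Real.rpow_one, inv_sub_inv hA.ne' hB.ne',
    div_le_div_iff₀ (by positivity) (by positivity)]
  nlinarith [sub_mul_rpow_add_one_le hs ht]

theorem inv_rpow_le_two_rpow_div_rpow_add_one {r t : ℝ} (hr : 0 ≤ r) (ht : 1 ≤ t) :
    (t ^ r)⁻¹ ≤ 2 ^ r / (t + 1) ^ r := by
  have hle : (t + 1) ^ r ≤ 2 ^ r * t ^ r := by
    rw [← Real.mul_rpow zero_le_two (by linarith)]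
    exact Real.rpow_le_rpow (by linarith) (by linarith) hr
  rw [le_div_iff₀ (Real.rpow_pos_of_pos (by linarith) r), inv_mul_eq_div,
    div_le_iff₀ (Real.rpow_pos_of_pos (by linarith) r)]
  exact hle

theorem div_rpow_le_div_rpow_add_one_add {C M α s t : ℝ} (hM : 0 < M) (hs : 0 ≤ s)
    (hsα : s * (1 + α) = 1) (hMC : s * 2 ^ (s + 1) ≤ C * M ^ (1 + α)) (ht : 1 ≤ t) :
    M / t ^ s ≤ M / (t + 1) ^ s + C * (M / (t + 1) ^ s) ^ (2 + α) := by
  have ht1 : 0 < t + 1 := by linarith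
  have hpow : (M / (t + 1) ^ s) ^ (2 + α) = M ^ (1 + α) * M / (t + 1) ^ (s + 1) := by
    rw [Real.div_rpow hM.le (by positivity), ← Real.rpow_mul ht1.le,
      show s * (2 + α) = s + 1 by linarith, show 2 + α = (1 + α) + 1 by ring,
      Real.rpow_add hM, Real.rpow_one]
  have hdiff := inv_rpow_sub_inv_rpow_add_one_le hs (by linarith : 0 < t)
  have hshift := inv_rpow_le_two_rpow_div_rpow_add_one (by linarith : 0 ≤ s + 1) ht
  calc M / t ^ s = M * ((t + 1) ^ s)⁻¹ + M * ((t ^ s)⁻¹ - ((t + 1) ^ s)⁻¹) := by ring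
    _ ≤ M * ((t + 1) ^ s)⁻¹ + M * (s * (2 ^ (s + 1) / (t + 1) ^ (s + 1))) := by
      gcongr
      calc _ ≤ s / t ^ (s + 1) := hdiff
        _ = s * (t ^ (s + 1))⁻¹ := div_eq_mul_inv _ _
        _ ≤ _ := by gcongr
    _ ≤ M * ((t + 1) ^ s)⁻¹ + M * (C * M ^ (1 + α) / (t + 1) ^ (s + 1)) := by
      rw [← mul_div_assoc]; gcongr
    _ = M / (t + 1) ^ s + C * (M / (t + 1) ^ s) ^ (2 + α) := by
      rw [hpow]; ring

namespace SlowDecayLQ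

/-- the discrete weighted decay lemma of Ammari–Tucsnak:
`a_{m+1} ≤ a_m - C a_{m+1}^{2+α}` implies `a_m ≤ M (m+1)^{-1/(1+α)}`. -/
theorem statement14 (C α : ℝ) (hC : 0 < C) (hα : -1 < α) (a : ℕ → ℝ)
    (hpos : ∀ m : ℕ, 1 ≤ m → 0 < a m)
    (hrec : ∀ m : ℕ, 1 ≤ m → a (m + 1) ≤ a m - C * a (m + 1) ^ (2 + α)) :
    ∃ M : ℝ, 0 < M ∧ ∀ m : ℕ, 1 ≤ m →
      a m ≤ M / ((m : ℝ) + 1) ^ ((1 : ℝ) / (1 + α)) := by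
  have hα' : 0 < 1 + α := by linarith
  set s : ℝ := 1 / (1 + α)
  have hs : 0 < s := by positivity
  have hsα : s * (1 + α) = 1 := one_div_mul_cancel hα'.ne'
  set M := max (a 1 * 2 ^ s) ((s * 2 ^ (s + 1) / C) ^ s)
  have hM : 0 < M := lt_max_of_lt_left (mul_pos (hpos 1 le_rfl) (by positivity))
  have hMC : s * 2 ^ (s + 1) ≤ C * M ^ (1 + α) := by
    have : s * 2 ^ (s + 1) / C ≤ M ^ (1 + α) :=
      calc _ = ((s * 2 ^ (s + 1) / C) ^ s) ^ (1 + α) := by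
            rw [← Real.rpow_mul (by positivity), hsα, Real.rpow_one]
        _ ≤ M ^ (1 + α) := Real.rpow_le_rpow (by positivity) (le_max_right _ _) hα'.le
    rw [div_le_iff₀ hC] at this
    linarith
  refine ⟨M, hM, (strictMonoOn_add_mul_rpow hC.le (by linarith : 0 < 2 + α)).le_of_le_apply_succ
    (b := fun m => M / ((m : ℝ) + 1) ^ s) (fun m hm => (hpos m hm).le)
    (fun m _ => Set.mem_Ici.2 (by positivity)) (fun m hm => by linarith [hrec m hm])
    (fun m _ => ?_) ?_⟩
  · push_cast
    exact div_rpow_le_div_rpow_add_one_add hM hs.le hsα hMC (by simp)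
  · rw [le_div_iff₀ (by positivity)]
    norm_num [M]

end SlowDecayLQ
end
end

section
/- Let F : [0,∞) → [0,∞) be nonincreasing and suppose there exist constants C > 0, α > −1 and σ > 0 such that F(t + σ) ≤ F(t) − C · F(t + σ)^{2+α} for all t ≥ 0. Then there exists a constant M > 0, depending only on C, α and σ, such that F(t) ≤ M (t+1)^{−1/(1+α)} for all t ≥ 0. -/
open MeasureTheory Filter
open scoped ENNReal NNReal

noncomputable section

namespace SlowDecayLQ

variable {H : Type*} [NormedAddCommGroup H] [InnerProductSpace ℂ H] [CompleteSpace H]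

/-!
Put `γ = 1 + α` and sample `a m = F (m σ)`, so that `a (m+1) + C a (m+1)^(1+γ) ≤ a m`.
Then `a m ^ (-γ)` increases by at least a fixed `c > 0` per step: with `x = C a (m+1)^γ`,
which is at most `K = C a 0 ^ γ`, one has `a m ≥ a (m+1) (1 + x)`, and Bernoulli's inequality
`(1 + x)^(γ+1) ≥ 1 + (γ+1) x` gives
`1 - (1 + x)^(-γ) ≥ γ x (1 + x)^(-(γ+1)) ≥ γ x (1 + K)^(-(γ+1))`.
Hence `a m ≲ (m + 1)^(-1/γ)`, and monotonicity of `F` carries this to all `t ≥ 0`.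
-/

open Real

lemma one_add_rpow_neg_add_mul_le_one {γ x : ℝ} (hγ : 0 ≤ γ) (hx : 0 ≤ x) :
    (1 + x) ^ (-γ) + γ * x * (1 + x) ^ (-(γ + 1)) ≤ 1 := by
  have h1x : 0 < 1 + x := by linarith
  have bernoulli : 1 + (γ + 1) * x ≤ (1 + x) ^ (γ + 1) :=
    one_add_mul_self_le_rpow_one_add (by linarith) (by linarith)
  have hsplit : (1 + x) ^ (-γ) = (1 + x) * (1 + x) ^ (-(γ + 1)) := by
    rw [show -γ = 1 + -(γ + 1) by ring, rpow_add h1x, rpow_one]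
  calc (1 + x) ^ (-γ) + γ * x * (1 + x) ^ (-(γ + 1))
      = (1 + (γ + 1) * x) * (1 + x) ^ (-(γ + 1)) := by rw [hsplit]; ring
    _ ≤ (1 + x) ^ (γ + 1) * (1 + x) ^ (-(γ + 1)) := by gcongr
    _ = 1 := by rw [← rpow_add h1x, add_neg_cancel, rpow_zero]

lemma rpow_neg_add_le_rpow_neg_of_add_mul_rpow_le {γ C K u v : ℝ} (hγ : 0 ≤ γ) (hC : 0 ≤ C)
    (hu : 0 < u) (hK : C * u ^ γ ≤ K) (huv : u + C * u ^ (1 + γ) ≤ v) :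
    v ^ (-γ) + γ * C * (1 + K) ^ (-(γ + 1)) ≤ u ^ (-γ) := by
  set x := C * u ^ γ with hx
  have hx0 : 0 ≤ x := by positivity
  have hux : u * (1 + x) ≤ v := by
    rw [rpow_add hu, rpow_one] at huv; linarith
  have hv : v ^ (-γ) ≤ u ^ (-γ) * (1 + x) ^ (-γ) := by
    rw [← mul_rpow hu.le (by positivity)]
    exact rpow_le_rpow_of_nonpos (by positivity) hux (by linarith)
  have hux_eq : u ^ (-γ) * x = C := by
    rw [hx, rpow_neg hu.le]; field_simp
  have hKx : (1 + K) ^ (-(γ + 1)) ≤ (1 + x) ^ (-(γ + 1)) :=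
    rpow_le_rpow_of_nonpos (by positivity) (by linarith) (by linarith)
  have tangent := one_add_rpow_neg_add_mul_le_one hγ hx0
  have hu0 : 0 ≤ u ^ (-γ) := by positivity
  calc v ^ (-γ) + γ * C * (1 + K) ^ (-(γ + 1))
      ≤ u ^ (-γ) * (1 + x) ^ (-γ) + u ^ (-γ) * (γ * x * (1 + x) ^ (-(γ + 1))) := by
        refine add_le_add hv ?_
        rw [← hux_eq, show γ * (u ^ (-γ) * x) = u ^ (-γ) * (γ * x) by ring, mul_assoc]
        gcongr
    _ ≤ u ^ (-γ) := by
        rw [← mul_add]; exact mul_le_of_le_one_right hu0 tangent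

lemma exists_le_mul_rpow_of_le_sub_mul_rpow {a : ℕ → ℝ} {C γ : ℝ} (hC : 0 < C) (hγ : 0 < γ)
    (ha : ∀ m, 0 ≤ a m) (hrec : ∀ m, a (m + 1) ≤ a m - C * a (m + 1) ^ (1 + γ)) :
    ∃ M, 0 < M ∧ ∀ m : ℕ, a m ≤ M * ((m : ℝ) + 1) ^ (-(1 / γ)) := by
  have hanti : Antitone a := antitone_nat_of_succ_le fun m => by
    have := hrec m
    have : 0 ≤ C * a (m + 1) ^ (1 + γ) := by have := ha (m + 1); positivity
    linarith
  rcases (ha 0).eq_or_lt with h0 | h0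
  · refine ⟨1, one_pos, fun m => ?_⟩
    have : a m ≤ 0 := h0 ▸ hanti m.zero_le
    have : 0 < ((m : ℝ) + 1) ^ (-(1 / γ)) := by positivity
    linarith
  set c := γ * C * (1 + C * a 0 ^ γ) ^ (-(γ + 1))
  have growth : ∀ m : ℕ, 0 < a m → a 0 ^ (-γ) + c * m ≤ a m ^ (-γ) := by
    intro m
    induction m with
    | zero => simp
    | succ m ih =>
      intro hm
      have hbound : C * a (m + 1) ^ γ ≤ C * a 0 ^ γ := by
        gcongr
        exact hanti (m + 1).zero_le
      have step := rpow_neg_add_le_rpow_neg_of_add_mul_rpow_le (v := a m) hγ.le hC.le hm hbound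
        (by linarith [hrec m])
      have := ih (hm.trans_le (hanti m.le_succ))
      push_cast
      linarith
  set d := min (a 0 ^ (-γ)) c
  have hd : 0 < d := lt_min (by positivity) (by positivity)
  refine ⟨d ^ (-(1 / γ)), by positivity, fun m => ?_⟩
  rcases (ha m).eq_or_lt with hm | hm
  · rw [← hm]; positivity
  have hlin : d * ((m : ℝ) + 1) ≤ a m ^ (-γ) := by
    have := growth m hm
    nlinarith [min_le_left (a 0 ^ (-γ)) c, min_le_right (a 0 ^ (-γ)) c,
      (m.cast_nonneg : (0 : ℝ) ≤ m)]
  calc a m = (a m ^ (-γ)) ^ (-(1 / γ)) := by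
        rw [← rpow_mul (ha m), show -γ * -(1 / γ) = 1 by field_simp, rpow_one]
    _ ≤ (d * ((m : ℝ) + 1)) ^ (-(1 / γ)) :=
        rpow_le_rpow_of_nonpos (by positivity) hlin (by simp [hγ.le])
    _ = d ^ (-(1 / γ)) * ((m : ℝ) + 1) ^ (-(1 / γ)) := mul_rpow hd.le (by positivity)

lemma le_mul_rpow_of_sample_le {F : ℝ → ℝ} {σ p M : ℝ} (hσ : 0 < σ) (hp : 0 ≤ p) (hM : 0 ≤ M)
    (hF : AntitoneOn F (Set.Ici 0)) (hsample : ∀ m : ℕ, F (m * σ) ≤ M * ((m : ℝ) + 1) ^ (-p))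
    {t : ℝ} (ht : 0 ≤ t) : F t ≤ M * (σ + 1) ^ p * (t + 1) ^ (-p) := by
  set m := ⌊t / σ⌋₊
  have hlow : m * σ ≤ t := (le_div_iff₀ hσ).1 (Nat.floor_le (by positivity))
  have hhigh : t < (m + 1) * σ := (div_lt_iff₀ hσ).1 (Nat.lt_floor_add_one _)
  have hcmp : t + 1 ≤ (σ + 1) * (m + 1) := by nlinarith
  calc F t ≤ F (m * σ) := hF (Set.mem_Ici.2 (by positivity)) (Set.mem_Ici.2 ht) hlow
    _ ≤ M * ((m : ℝ) + 1) ^ (-p) := hsample m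
    _ = M * (σ + 1) ^ p * ((σ + 1) * (m + 1)) ^ (-p) := by
        rw [mul_rpow (by positivity) (by positivity), rpow_neg (by positivity : (0 : ℝ) ≤ σ + 1)]
        field_simp
    _ ≤ M * (σ + 1) ^ p * (t + 1) ^ (-p) := by
        have := rpow_le_rpow_of_nonpos (by linarith) hcmp (neg_nonpos.2 hp)
        gcongr

/-- continuous-time version of the discrete decay lemma: a nonincreasing
nonnegative `F` with `F(t+σ) ≤ F(t) - C F(t+σ)^{2+α}` decays like `(t+1)^{-1/(1+α)}`. -/
theorem statement15 (F : ℝ → ℝ) (C α σ : ℝ) (hC : 0 < C) (hα : -1 < α) (hσ : 0 < σ)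
    (hF0 : ∀ t : ℝ, 0 ≤ t → 0 ≤ F t)
    (hmono : ∀ s t : ℝ, 0 ≤ s → s ≤ t → F t ≤ F s)
    (hrec : ∀ t : ℝ, 0 ≤ t → F (t + σ) ≤ F t - C * F (t + σ) ^ (2 + α)) :
    ∃ M : ℝ, 0 < M ∧ ∀ t : ℝ, 0 ≤ t →
      F t ≤ M * (t + 1) ^ (-(1 : ℝ) / (1 + α)) := by
  have hγ : 0 < 1 + α := by linarith
  obtain ⟨M, hM, hdecay⟩ := exists_le_mul_rpow_of_le_sub_mul_rpow
    (a := fun m : ℕ => F (m * σ)) hC hγ (fun m => hF0 _ (by positivity)) fun m => by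
      simpa [add_mul, show 1 + (1 + α) = 2 + α by ring] using hrec (m * σ) (by positivity)
  refine ⟨M * (σ + 1) ^ (1 / (1 + α)), by positivity, fun t ht => ?_⟩
  rw [neg_div]
  exact le_mul_rpow_of_sample_le hσ (by positivity) hM.le (fun s hs u _ hsu => hmono s u hs hsu)
    hdecay ht

end SlowDecayLQ
end
end
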